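/- For symmetric positive definite matrices C₁ ⪯ C₂ (Loewner order) and any n×d matrix F and symmetric positive definite V, the corresponding Kalman posterior covariances satisfy C₁ − C₁F'(FC₁F' + V)⁻¹FC₁ ⪯ C₂ − C₂F'(FC₂F' + V)⁻¹FC₂; i.e., the Kalman measurement update is monotone in the prior covariance. -/

import Mathlib

/-!
Writing `K = Fᵀ V⁻¹ F`, the Woodbury identity turns the update of a prior covariance `C` into
`(C⁻¹ + K)⁻¹`. Matrix inversion is antitone on positive definite matrices, since
`A⁻¹ - (A + Xᴴ X)⁻¹ = (A⁻¹ Xᴴ) (1 + X A⁻¹ Xᴴ)⁻¹ (A⁻¹ Xᴴ)ᴴ`, again by Woodbury. Applying it twice,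
`C₁ ⪯ C₂` gives `C₂⁻¹ + K ⪯ C₁⁻¹ + K` and then `(C₁⁻¹ + K)⁻¹ ⪯ (C₂⁻¹ + K)⁻¹`.
-/

open Matrix

namespace Matrix

variable {m n α 𝕜 : Type*}

theorem inv_add_mul_inv_mul_inv_eq_sub [Fintype m] [DecidableEq m] [Fintype n] [DecidableEq n]
    [CommRing α] (A : Matrix n n α) (U : Matrix n m α) (C : Matrix m m α) (V : Matrix m n α)
    (hA : IsUnit A) (hC : IsUnit C) (hVAUC : IsUnit (V * A * U + C)) :
    (A⁻¹ + U * C⁻¹ * V)⁻¹ = A - A * U * (V * A * U + C)⁻¹ * V * A := by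
  have hA' : A⁻¹⁻¹ = A := nonsing_inv_nonsing_inv A ((isUnit_iff_isUnit_det A).mp hA)
  have hC' : C⁻¹⁻¹ = C := nonsing_inv_nonsing_inv C ((isUnit_iff_isUnit_det C).mp hC)
  have woodbury := add_mul_mul_inv_eq_sub A⁻¹ U C⁻¹ V (isUnit_nonsing_inv_iff.mpr hA)
    (isUnit_nonsing_inv_iff.mpr hC) (by rwa [hA', hC', add_comm])
  rwa [hA', hC', add_comm C] at woodbury

section PosDef

variable [Fintype n] [DecidableEq n] [RCLike 𝕜]

open scoped ComplexOrder

theorem PosDef.posSemidef_inv_sub_inv_add_conjTranspose_mul_self [Fintype m] [DecidableEq m]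
    {A : Matrix n n 𝕜} (hA : A.PosDef) (X : Matrix m n 𝕜) :
    (A⁻¹ - (A + Xᴴ * X)⁻¹).PosSemidef := by
  have hM : (1 + X * A⁻¹ * Xᴴ).PosDef :=
    PosDef.one.add_posSemidef (hA.inv.posSemidef.mul_mul_conjTranspose_same X)
  have woodbury := add_mul_mul_inv_eq_sub A Xᴴ 1 X hA.isUnit isUnit_one
    (by simpa using hM.isUnit)
  rw [Matrix.mul_one, inv_one] at woodbury
  rw [woodbury, sub_sub_cancel]
  have := hM.inv.posSemidef.mul_mul_conjTranspose_same (A⁻¹ * Xᴴ)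
  rwa [conjTranspose_mul, conjTranspose_conjTranspose, hA.inv.isHermitian.eq,
    ← Matrix.mul_assoc] at this

open scoped MatrixOrder in
theorem PosDef.posSemidef_inv_sub_inv {A B : Matrix n n 𝕜} (hA : A.PosDef)
    (hAB : (B - A).PosSemidef) : (A⁻¹ - B⁻¹).PosSemidef := by
  obtain ⟨X, hX⟩ := CStarAlgebra.nonneg_iff_eq_star_mul_self.mp hAB.nonneg
  rw [← add_sub_cancel A B, hX]
  exact hA.posSemidef_inv_sub_inv_add_conjTranspose_mul_self X

end PosDef

end Matrix

/-- The Kalman measurement update is monotone in the prior covariance: for symmetric positive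
definite `C₁ ⪯ C₂` and symmetric positive definite `V`,
`C₁ − C₁Fᵀ(FC₁Fᵀ + V)⁻¹FC₁ ⪯ C₂ − C₂Fᵀ(FC₂Fᵀ + V)⁻¹FC₂`. -/
theorem kalman_update_monotone {d n : ℕ}
    (C1 C2 : Matrix (Fin d) (Fin d) ℝ) (F : Matrix (Fin n) (Fin d) ℝ)
    (V : Matrix (Fin n) (Fin n) ℝ)
    (hC1 : C1.PosDef) (hC2 : C2.PosDef) (hV : V.PosDef)
    (h12 : (C2 - C1).PosSemidef) :
    ((C2 - C2 * Fᵀ * (F * C2 * Fᵀ + V)⁻¹ * F * C2) -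
      (C1 - C1 * Fᵀ * (F * C1 * Fᵀ + V)⁻¹ * F * C1)).PosSemidef := by
  have innovation_posDef {C : Matrix (Fin d) (Fin d) ℝ} (hC : C.PosDef) :
      (F * C * Fᵀ + V).PosDef := by
    simpa using PosDef.posSemidef_add (hC.posSemidef.mul_mul_conjTranspose_same F) hV
  have information_posSemidef : (Fᵀ * V⁻¹ * F).PosSemidef := by
    simpa using hV.inv.posSemidef.mul_mul_conjTranspose_same Fᵀ
  rw [← inv_add_mul_inv_mul_inv_eq_sub C1 Fᵀ V F hC1.isUnit hV.isUnit
      (innovation_posDef hC1).isUnit,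
    ← inv_add_mul_inv_mul_inv_eq_sub C2 Fᵀ V F hC2.isUnit hV.isUnit
      (innovation_posDef hC2).isUnit]
  refine (hC2.inv.add_posSemidef information_posSemidef).posSemidef_inv_sub_inv ?_
  rw [add_sub_add_right_eq_sub]
  exact hC1.posSemidef_inv_sub_inv h12
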